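/- arXiv:2503.18131 — 2 statements merged into one kernel-verified Lean document; each statement's English description precedes it below -/
import Mathlib

section
/- For α ∈ (0,1), the function K_α(y) = ∫_{-π}^{π} e^{-2yt}(π - |t|)^{α} dt satisfies the two-sided asymptotic K_α(y) ≍ e^{2π|y|}/|y|^{α+1} as |y| → ∞; i.e., there exist constants c, C > 0 and Y > 0 such that c·e^{2π|y|}/|y|^{α+1} ≤ K_α(y) ≤ C·e^{2π|y|}/|y|^{α+1} for all |y| ≥ Y. -/
/-! For `t ∈ [-π, π]` the weight `(π - |t|) ^ α` is at most `(π + t) ^ α`, with equality for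
`t ≤ 0`, and the substitution `s = π + t` turns `∫ e^{-2yt} (π + t)^α dt` into
`e^{2πy} ∫ s^α e^{-2ys} ds`. For `y > 0` the latter integral is at most its value over `(0, ∞)`,
which is `Γ(α + 1) / (2y)^{α + 1}`, and at least its part over `s ≤ 1/(2y)`, where
`e^{-2ys} ≥ e^{-1}`. Negative `y` reduce to positive ones through `t ↦ -t`. -/

open Real MeasureTheory intervalIntegral Set

section LaplaceRpow

variable {α r : ℝ}

lemma integral_rpow_mul_exp_neg_mul_le_Gamma_div (hα : -1 < α) (hr : 0 < r) {L : ℝ}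
    (hL : 0 ≤ L) :
    ∫ s in 0..L, s ^ α * exp (-(r * s)) ≤ Gamma (α + 1) / r ^ (α + 1) := by
  have hGamma := integral_rpow_mul_exp_neg_mul_Ioi (a := α + 1) (by linarith) hr
  rw [add_sub_cancel_right, div_rpow zero_le_one hr.le, one_rpow] at hGamma
  have hint : IntegrableOn (fun s => s ^ α * exp (-(r * s))) (Ioi 0) :=
    Integrable.of_integral_ne_zero <| by
      rw [hGamma]; have := Gamma_pos_of_pos (by linarith : 0 < α + 1); positivity
  calc ∫ s in 0..L, s ^ α * exp (-(r * s))
      ≤ ∫ s in Ioi 0, s ^ α * exp (-(r * s)) := by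
        rw [integral_of_le hL]
        refine setIntegral_mono_set hint ?_ Ioc_subset_Ioi_self.eventuallyLE
        filter_upwards [self_mem_ae_restrict measurableSet_Ioi] with s hs
        have := rpow_nonneg (le_of_lt hs) α
        positivity
    _ = Gamma (α + 1) / r ^ (α + 1) := by rw [hGamma]; ring

lemma exp_neg_one_div_le_integral_rpow_mul_exp_neg_mul (hα : -1 < α) (hr : 0 < r) :
    exp (-1) / ((α + 1) * r ^ (α + 1)) ≤ ∫ s in 0..r⁻¹, s ^ α * exp (-(r * s)) := by
  have hr' : 0 ≤ r⁻¹ := inv_nonneg.mpr hr.le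
  have hpow : IntervalIntegrable (fun s : ℝ => s ^ α) volume 0 r⁻¹ :=
    intervalIntegrable_rpow' hα
  calc exp (-1) / ((α + 1) * r ^ (α + 1))
      = ∫ s in 0..r⁻¹, s ^ α * exp (-1) := by
        rw [intervalIntegral.integral_mul_const, integral_rpow (Or.inl hα),
          zero_rpow (by linarith : α + 1 ≠ 0), inv_rpow hr.le]
        field_simp
        ring
    _ ≤ ∫ s in 0..r⁻¹, s ^ α * exp (-(r * s)) := by
      refine integral_mono_on hr' (hpow.mul_const _)
        (hpow.mul_continuousOn (by fun_prop)) fun s hs => ?_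
      have hrs : r * s ≤ 1 := by
        calc r * s ≤ r * r⁻¹ := mul_le_mul_of_nonneg_left hs.2 hr.le
          _ = 1 := mul_inv_cancel₀ hr.ne'
      exact mul_le_mul_of_nonneg_left (exp_le_exp.mpr (by linarith)) (rpow_nonneg hs.1 α)

lemma integral_rpow_sub_mul_exp_neg_mul (a L : ℝ) :
    ∫ t in a..a + L, (t - a) ^ α * exp (-(r * t))
      = exp (-(r * a)) * ∫ s in 0..L, s ^ α * exp (-(r * s)) := by
  rw [← intervalIntegral.integral_const_mul]
  have := integral_comp_add_right (a := 0) (b := L)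
    (fun t => (t - a) ^ α * exp (-(r * t))) a
  rw [zero_add, add_comm L] at this
  rw [← this]
  refine integral_congr fun s _ => ?_
  simp only [add_sub_cancel_right]
  rw [mul_add, neg_add, exp_add]
  ring

end LaplaceRpow

noncomputable def K (α y : ℝ) : ℝ := ∫ t in (-π)..π, exp (-2 * y * t) * (π - |t|) ^ α

lemma K_neg (α y : ℝ) : K α (-y) = K α y := by
  rw [K, K, ← neg_neg π, ← integral_comp_neg, neg_neg]
  congr 1 with t
  rw [abs_neg]
  ring_nf

lemma K_abs (α y : ℝ) : K α |y| = K α y := by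
  rcases abs_cases y with ⟨h, _⟩ | ⟨h, _⟩ <;> simp only [h, K_neg]

lemma setIntegral_Ioo_eq_K (α y : ℝ) :
    ∫ t in Ioo (-π) π, exp (-2 * y * t) * (π - |t|) ^ α = K α y := by
  rw [K, integral_of_le (by linarith [pi_pos]), integral_Ioc_eq_integral_Ioo]

section Bounds

variable {α y : ℝ}

lemma continuous_K_integrand (hα : 0 ≤ α) (y : ℝ) :
    Continuous fun t => exp (-2 * y * t) * (π - |t|) ^ α := by
  fun_prop (disch := exact hα)

lemma sub_abs_nonneg_of_mem_Icc {a t : ℝ} (ht : t ∈ Icc (-a) a) : 0 ≤ a - |t| :=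
  sub_nonneg.mpr (abs_le.mpr ht)

lemma K_le (hα : 0 ≤ α) (hy : 0 < y) :
    K α y ≤ Gamma (α + 1) / 2 ^ (α + 1) * (exp (2 * π * y) / y ^ (α + 1)) := by
  have hπ := pi_pos
  have hdom : K α y ≤ ∫ t in -π..-π + 2 * π, (t - -π) ^ α * exp (-(2 * y * t)) := by
    rw [show -π + 2 * π = π by ring]
    refine integral_mono_on (by linarith) ((continuous_K_integrand hα y).intervalIntegrable _ _)
      (Continuous.intervalIntegrable (by fun_prop (disch := exact hα)) _ _) fun t ht => ?_
    have := sub_abs_nonneg_of_mem_Icc ht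
    have : π - |t| ≤ t - -π := by linarith [neg_abs_le t]
    rw [mul_comm, neg_mul, neg_mul]
    gcongr
  calc K α y ≤ ∫ t in -π..-π + 2 * π, (t - -π) ^ α * exp (-(2 * y * t)) := hdom
    _ = exp (-(2 * y * -π)) * ∫ s in 0..2 * π, s ^ α * exp (-(2 * y * s)) :=
      integral_rpow_sub_mul_exp_neg_mul _ _
    _ ≤ exp (-(2 * y * -π)) * (Gamma (α + 1) / (2 * y) ^ (α + 1)) := by
      gcongr
      exact integral_rpow_mul_exp_neg_mul_le_Gamma_div (by linarith) (by positivity)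
        (by positivity)
    _ = Gamma (α + 1) / 2 ^ (α + 1) * (exp (2 * π * y) / y ^ (α + 1)) := by
      rw [mul_rpow zero_le_two hy.le, show -(2 * y * -π) = 2 * π * y by ring]
      field_simp

lemma le_K (hα : 0 ≤ α) (hy : 0 < y) (hyπ : (2 * y)⁻¹ ≤ π) :
    exp (-1) / ((α + 1) * 2 ^ (α + 1)) * (exp (2 * π * y) / y ^ (α + 1)) ≤ K α y := by
  have hπ := pi_pos
  have hb : 0 < (2 * y)⁻¹ := by positivity
  calc exp (-1) / ((α + 1) * 2 ^ (α + 1)) * (exp (2 * π * y) / y ^ (α + 1))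
      = exp (-(2 * y * -π)) * (exp (-1) / ((α + 1) * (2 * y) ^ (α + 1))) := by
        rw [mul_rpow zero_le_two hy.le, show -(2 * y * -π) = 2 * π * y by ring]
        field_simp
    _ ≤ exp (-(2 * y * -π)) * ∫ s in 0..(2 * y)⁻¹, s ^ α * exp (-(2 * y * s)) := by
      gcongr
      exact exp_neg_one_div_le_integral_rpow_mul_exp_neg_mul (by linarith) (by positivity)
    _ = ∫ t in -π..-π + (2 * y)⁻¹, (t - -π) ^ α * exp (-(2 * y * t)) :=
      (integral_rpow_sub_mul_exp_neg_mul _ _).symm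
    _ = ∫ t in -π..-π + (2 * y)⁻¹, exp (-2 * y * t) * (π - |t|) ^ α := by
      refine integral_congr fun t ht => ?_
      rw [uIcc_of_le (by linarith)] at ht
      rw [abs_of_nonpos (by linarith [ht.2]), mul_comm, neg_mul, neg_mul]
      ring_nf
    _ ≤ K α y := by
      refine integral_mono_interval le_rfl (by linarith) (by linarith) ?_
        ((continuous_K_integrand hα y).intervalIntegrable _ _)
      filter_upwards [self_mem_ae_restrict measurableSet_Ioc] with t ht
      have := sub_abs_nonneg_of_mem_Icc (Ioc_subset_Icc_self ht)
      positivity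

end Bounds

theorem K_alpha_asymptotics (α : ℝ) (hα : α ∈ Set.Ioo (0:ℝ) 1) :
    ∃ c C Y : ℝ, 0 < c ∧ 0 < C ∧ 0 < Y ∧
      ∀ y : ℝ, Y ≤ |y| →
        c * (Real.exp (2*π*|y|) / |y| ^ (α+1)) ≤
          (∫ t in Set.Ioo (-π) π, Real.exp (-2*y*t) * (π - |t|) ^ α) ∧
        (∫ t in Set.Ioo (-π) π, Real.exp (-2*y*t) * (π - |t|) ^ α) ≤
          C * (Real.exp (2*π*|y|) / |y| ^ (α+1)) := by
  have hα0 : 0 ≤ α := hα.1.le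
  have hΓ : 0 < Gamma (α + 1) := Gamma_pos_of_pos (by linarith)
  refine ⟨exp (-1) / ((α + 1) * 2 ^ (α + 1)), Gamma (α + 1) / 2 ^ (α + 1), 1,
    by positivity, by positivity, one_pos, fun y hy => ?_⟩
  have hy0 : 0 < |y| := by linarith
  have hyπ : (2 * |y|)⁻¹ ≤ π := by
    rw [inv_le_iff_one_le_mul₀ (by positivity)]
    nlinarith [pi_gt_three]
  rw [setIntegral_Ioo_eq_K, ← K_abs]
  exact ⟨le_K hα0 hy0 hyπ, K_le hα0 hy0⟩
end

section
/- Let u_n = 2^{n-1}Q with Q > 1, and let β_n ∈ (1/3, 2/3), v_n ∈ [u_n - √u_n - 1, u_n - √u_n + 1]. Set S(z) = ∏_{n≥1}(1 - z/(u_n+β_n)) and G₁(z) = ∏_{n≥1}(1 - z/v_n). Then there exist constants 0 < c₁ ≤ c₂ (depending on Q) such that c₁ ≤ |G₁(z)/S(z)| ≤ c₂ for all z ∈ ℂ outside the union of the balls B_{2√u_n}(u_n), n ≥ 1. -/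
open Real

/-!
Both zeros `v n` and `u n + β n` lie in `zeroWindow (u n) = [u n - √(u n) - 1, u n + 1]`. For such
`a`, `c` and `z` outside the discs, `(1 - z/a)/(1 - z/c) - 1 = z (a - c) / (a (c - z))` with
`|a - c| ≤ 2 √(u n)` and `|c - z| ≥ √(u n) / 2`, so it is at most `16 / √(u n)` unless
`u n / 2 < |z| < 2 u n`; by lacunarity that happens for at most two indices, where the bound is
still `16`. Applied to the quotient `q n` of the `n`-th factors and to its inverse, this bounds
`|log |q n||` by a summable sequence whose sum does not depend on `z`, and
`|G₁ / S| = exp (∑ log |q n|)`.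
-/

lemma abs_log_norm_le_of_norm_sub_one_le {𝕜 : Type*} [NormedDivisionRing 𝕜] {q : 𝕜} {b : ℝ}
    (hq : q ≠ 0) (h : ‖q - 1‖ ≤ b) (h_inv : ‖q⁻¹ - 1‖ ≤ b) : |Real.log ‖q‖| ≤ b := by
  have key : ∀ p : 𝕜, p ≠ 0 → ‖p - 1‖ ≤ b → Real.log ‖p‖ ≤ b := fun p hp hpb =>
    calc Real.log ‖p‖ ≤ ‖p‖ - 1 := Real.log_le_sub_one_of_pos (norm_pos_iff.2 hp)
      _ ≤ ‖p - 1‖ := by simpa using norm_sub_norm_le p 1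
      _ ≤ b := hpb
  have := key q⁻¹ (inv_ne_zero hq) h_inv
  rw [norm_inv, Real.log_inv] at this
  exact abs_le.2 ⟨by linarith, key q hq h⟩

lemma multipliable_one_sub_of_summable_norm {ι : Type*} {f : ι → ℂ} (hf : Summable (‖f ·‖)) :
    Multipliable (fun i => 1 - f i) :=
  (multipliable_one_add_of_summable (f := fun i => -f i) (by simpa using hf)).congr
    fun i => (sub_eq_add_neg 1 (f i)).symm

lemma tprod_one_sub_ne_zero_of_summable_norm {ι : Type*} {f : ι → ℂ} (hf : Summable (‖f ·‖))
    (hf₀ : ∀ i, 1 - f i ≠ 0) : ∏' i, (1 - f i) ≠ 0 := by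
  simpa [← sub_eq_add_neg] using
    tprod_one_add_ne_zero_of_summable (f := fun i => -f i) (by simpa [← sub_eq_add_neg] using hf₀)
      (by simpa using hf)

lemma norm_tprod_div_tprod_mem_Icc {ι : Type*} {f g : ι → ℂ} {b : ι → ℝ} {B : ℝ}
    (hf : Summable (‖f ·‖)) (hg : Summable (‖g ·‖))
    (hf₀ : ∀ i, 1 - f i ≠ 0) (hg₀ : ∀ i, 1 - g i ≠ 0)
    (hb : Summable b) (hbB : ∑' i, b i ≤ B)
    (hfg : ∀ i, |Real.log ‖(1 - f i) / (1 - g i)‖| ≤ b i) :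
    ‖(∏' i, (1 - f i)) / ∏' i, (1 - g i)‖ ∈ Set.Icc (exp (-B)) (exp B) := by
  have hne := tprod_one_sub_ne_zero_of_summable_norm hg hg₀
  have hmf := multipliable_one_sub_of_summable_norm hf
  have hmg := multipliable_one_sub_of_summable_norm hg
  have hlog : Summable fun i => Real.log ‖(1 - f i) / (1 - g i)‖ := hb.of_norm_bounded hfg
  have hsum : |∑' i, Real.log ‖(1 - f i) / (1 - g i)‖| ≤ B :=
    (tsum_of_norm_bounded (f := fun i => Real.log ‖(1 - f i) / (1 - g i)‖) hb.hasSum hfg).trans hbB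
  rw [← hmf.tprod_div₀ hmg hne, (hmf.div₀ hmg hne).norm_tprod,
    ← Real.rexp_tsum_eq_tprod (fun i => norm_pos_iff.2 (div_ne_zero (hf₀ i) (hg₀ i))) hlog]
  exact ⟨exp_le_exp.2 (neg_le_of_abs_le hsum), exp_le_exp.2 (le_of_abs_le hsum)⟩

lemma one_sub_div_div_one_sub_div_sub_one {K : Type*} [Field K] {a c z : K}
    (ha : a ≠ 0) (hc : c ≠ 0) (hcz : c - z ≠ 0) :
    (1 - z / a) / (1 - z / c) - 1 = z * (a - c) / (a * (c - z)) := by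
  have : 1 - z / c ≠ 0 := by rwa [one_sub_div hc, div_ne_zero_iff, and_iff_left hc]
  field_simp
  ring

lemma norm_le_four_mul_norm_sub {c : ℝ} {z : ℂ} (hc : 0 ≤ c)
    (h : 5 * ‖z‖ ≤ 4 * c ∨ 4 * c ≤ 3 * ‖z‖) : ‖z‖ ≤ 4 * ‖(c : ℂ) - z‖ := by
  have h₁ := norm_sub_norm_le (c : ℂ) z
  have h₂ := norm_sub_norm_le z (c : ℂ)
  rw [Complex.norm_real, norm_of_nonneg hc] at h₁ h₂
  rw [norm_sub_rev] at h₂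
  rcases h with h | h <;> linarith

def zeroWindow (u : ℝ) : Set ℝ := Set.Icc (u - √u - 1) (u + 1)

section zeroWindow

variable {u a c : ℝ}

lemma four_le_sqrt (hu : 16 ≤ u) : 4 ≤ √u :=
  (Real.le_sqrt (by norm_num) (by linarith)).2 (by linarith)

lemma sqrt_le_div_four (hu : 16 ≤ u) : √u ≤ u / 4 := by
  nlinarith [four_le_sqrt hu, Real.mul_self_sqrt (show 0 ≤ u by linarith)]

lemma five_mul_le_eight_mul_of_mem_zeroWindow (hu : 16 ≤ u) (ha : a ∈ zeroWindow u) :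
    5 * u ≤ 8 * a := by
  obtain ⟨ha, -⟩ := ha
  linarith [sqrt_le_div_four hu]

lemma le_two_mul_of_mem_zeroWindow (hu : 16 ≤ u) (ha : a ∈ zeroWindow u) : u ≤ 2 * a := by
  linarith [five_mul_le_eight_mul_of_mem_zeroWindow hu ha]

lemma pos_of_mem_zeroWindow (hu : 16 ≤ u) (ha : a ∈ zeroWindow u) : 0 < a := by
  linarith [le_two_mul_of_mem_zeroWindow hu ha]

lemma two_mul_le_three_mul_of_mem_zeroWindow (hu : 16 ≤ u) (ha : a ∈ zeroWindow u) :
    2 * a ≤ 3 * u := by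
  obtain ⟨-, ha⟩ := ha
  linarith

lemma abs_sub_le_of_mem_zeroWindow (hu : 16 ≤ u) (ha : a ∈ zeroWindow u)
    (hc : c ∈ zeroWindow u) : |a - c| ≤ 2 * √u := by
  obtain ⟨⟨ha₁, ha₂⟩, ⟨hc₁, hc₂⟩⟩ := And.intro ha hc
  have := four_le_sqrt hu
  exact abs_le.2 ⟨by linarith, by linarith⟩

lemma sqrt_le_two_mul_norm_sub_of_mem_zeroWindow {z : ℂ} (hu : 16 ≤ u)
    (ha : a ∈ zeroWindow u) (hz : 2 * √u ≤ ‖z - u‖) : √u ≤ 2 * ‖(a : ℂ) - z‖ := by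
  obtain ⟨ha₁, ha₂⟩ := ha
  have hau : ‖(a : ℂ) - u‖ ≤ √u + 1 := by
    rw [← Complex.ofReal_sub, Complex.norm_real, norm_eq_abs, abs_le]
    constructor <;> linarith [Real.sqrt_nonneg u]
  have := norm_sub_le_norm_sub_add_norm_sub z a u
  rw [norm_sub_rev z (a : ℂ)] at this
  linarith [four_le_sqrt hu]

lemma norm_div_sub_one_le_of_mem_zeroWindow {z : ℂ} (hu : 16 ≤ u) (ha : a ∈ zeroWindow u)
    (hc : c ∈ zeroWindow u) (hz : 2 * √u ≤ ‖z - u‖) :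
    ‖(1 - z / a) / (1 - z / c) - 1‖ ≤ if 2 * ‖z‖ ≤ u ∨ 2 * u ≤ ‖z‖ then 16 / √u else 16 := by
  set s := √u
  have hs : 4 ≤ s := four_le_sqrt hu
  have hss : s * s = u := Real.mul_self_sqrt (by linarith)
  have ha' : s * s / 2 ≤ a := by linarith [le_two_mul_of_mem_zeroWindow hu ha]
  have ha₀ : 0 < a := pos_of_mem_zeroWindow hu ha
  have hc₀ : 0 < c := pos_of_mem_zeroWindow hu hc
  have hac : |a - c| ≤ 2 * s := abs_sub_le_of_mem_zeroWindow hu ha hc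
  have hcz : s ≤ 2 * ‖(c : ℂ) - z‖ := sqrt_le_two_mul_norm_sub_of_mem_zeroWindow hu hc hz
  have hcz₀ : (c : ℂ) - z ≠ 0 := norm_pos_iff.1 (by linarith)
  rw [one_sub_div_div_one_sub_div_sub_one (by exact_mod_cast ha₀.ne')
      (by exact_mod_cast hc₀.ne') hcz₀, norm_div, norm_mul, norm_mul, ← Complex.ofReal_sub,
    Complex.norm_real, Complex.norm_real, norm_eq_abs, norm_of_nonneg ha₀.le]
  split_ifs with hfar
  · have hz₄ : ‖z‖ ≤ 4 * ‖(c : ℂ) - z‖ := by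
      refine norm_le_four_mul_norm_sub hc₀.le (hfar.imp (fun h => ?_) (fun h => ?_))
      · linarith [five_mul_le_eight_mul_of_mem_zeroWindow hu hc]
      · linarith [two_mul_le_three_mul_of_mem_zeroWindow hu hc]
    calc ‖z‖ * |a - c| / (a * ‖(c : ℂ) - z‖)
        ≤ 4 * ‖(c : ℂ) - z‖ * (2 * s) / (s * s / 2 * ‖(c : ℂ) - z‖) := by gcongr
      _ = 16 / s := by field_simp; ring
  · rw [not_or, not_le, not_le] at hfar
    have hz₂ : ‖z‖ ≤ 2 * (s * s) := by linarith [hfar.2]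
    have hcz' : s / 2 ≤ ‖(c : ℂ) - z‖ := by linarith
    calc ‖z‖ * |a - c| / (a * ‖(c : ℂ) - z‖)
        ≤ 2 * (s * s) * (2 * s) / (s * s / 2 * (s / 2)) := by gcongr
      _ = 16 := by field_simp; ring

lemma one_sub_div_ne_zero_of_mem_zeroWindow {z : ℂ} (hu : 16 ≤ u) (ha : a ∈ zeroWindow u)
    (hz : 2 * √u ≤ ‖z - u‖) : 1 - z / a ≠ 0 := by
  have ha₀ : (a : ℂ) ≠ 0 := by exact_mod_cast (pos_of_mem_zeroWindow hu ha).ne'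
  have haz : (a : ℂ) - z ≠ 0 := norm_pos_iff.1 <| by
    linarith [sqrt_le_two_mul_norm_sub_of_mem_zeroWindow hu ha hz, four_le_sqrt hu]
  rw [one_sub_div ha₀]
  exact div_ne_zero haz ha₀

lemma abs_log_norm_div_le_of_mem_zeroWindow {z : ℂ} (hu : 16 ≤ u) (ha : a ∈ zeroWindow u)
    (hc : c ∈ zeroWindow u) (hz : 2 * √u ≤ ‖z - u‖) :
    |Real.log ‖(1 - z / a) / (1 - z / c)‖| ≤
      if 2 * ‖z‖ ≤ u ∨ 2 * u ≤ ‖z‖ then 16 / √u else 16 := by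
  refine abs_log_norm_le_of_norm_sub_one_le
    (div_ne_zero (one_sub_div_ne_zero_of_mem_zeroWindow hu ha hz)
      (one_sub_div_ne_zero_of_mem_zeroWindow hu hc hz))
    (norm_div_sub_one_le_of_mem_zeroWindow hu ha hc hz) ?_
  rw [inv_div]
  exact norm_div_sub_one_le_of_mem_zeroWindow hu hc ha hz

end zeroWindow

section

variable {Q : ℝ} {u : ℕ → ℝ}

lemma summable_norm_div_of_le_two_mul (hQ : 0 < Q) (hu : ∀ n, u n = 2 ^ n * Q) {x : ℕ → ℝ}
    (hx : ∀ n, u n ≤ 2 * x n) (z : ℂ) : Summable fun n => ‖z / (x n : ℂ)‖ := by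
  refine (summable_geometric_two.mul_left (2 * ‖z‖ / Q)).of_nonneg_of_le (fun n => norm_nonneg _)
    fun n => ?_
  have hx₀ : 0 < x n := by nlinarith [hx n, hu n, pow_pos (two_pos : (0 : ℝ) < 2) n]
  rw [norm_div, Complex.norm_real, norm_of_nonneg hx₀.le, div_le_iff₀ hx₀, one_div, inv_pow]
  have := hx n
  rw [hu n] at this
  field_simp
  nlinarith [norm_nonneg z, pow_pos (two_pos : (0 : ℝ) < 2) n]

lemma summable_div_sqrt (hu : ∀ n, u n = 2 ^ n * Q) (C : ℝ) :
    Summable fun n => C / √(u n) := by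
  have hsqrt : ∀ n, C / √(u n) = C / √Q * (√2)⁻¹ ^ n := fun n => by
    have : √(2 ^ n) = √2 ^ n := by
      rw [show (2 : ℝ) ^ n = (√2 ^ n) ^ 2 by
          rw [← pow_mul, mul_comm, pow_mul, Real.sq_sqrt two_pos.le],
        Real.sqrt_sq (by positivity)]
    rw [hu n, Real.sqrt_mul (by positivity), this, inv_pow]
    field_simp
  simp_rw [hsqrt]
  exact (summable_geometric_of_lt_one (by positivity)
    (inv_lt_one_of_one_lt₀ (Real.lt_sqrt zero_le_one |>.2 (by norm_num)))).mul_left _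

lemma exists_eq_or_eq_succ_of_not_far (hQ : 0 < Q) (hu : ∀ n, u n = 2 ^ n * Q) (r : ℝ) :
    ∃ N, ∀ n, ¬(2 * r ≤ u n ∨ 2 * u n ≤ r) → n = N ∨ n = N + 1 := by
  have hex : ∃ n, r < 2 * u n := by
    obtain ⟨n, hn⟩ := pow_unbounded_of_one_lt (r / Q) one_lt_two
    refine ⟨n, ?_⟩
    rw [div_lt_iff₀ hQ] at hn
    nlinarith [hu n, pow_pos (two_pos : (0 : ℝ) < 2) n]
  refine ⟨Nat.find hex, fun n hn => ?_⟩
  rw [not_or, not_le, not_le] at hn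
  have hNn : Nat.find hex ≤ n := Nat.find_min' hex hn.2
  by_contra! h
  have : 4 * u (Nat.find hex) ≤ u n :=
    calc 4 * u (Nat.find hex) = 2 ^ (Nat.find hex + 2) * Q := by rw [hu]; ring
      _ ≤ 2 ^ n * Q := by gcongr <;> [norm_num; omega]
      _ = u n := (hu n).symm
  linarith [Nat.find_spec hex]

end

section

variable {x : ℕ → ℝ} {p : ℕ → Prop} [DecidablePred p] {C : ℝ} {N : ℕ}

lemma ite_le_add_ite_add_ite (hx₀ : ∀ n, 0 ≤ x n) (hC : 0 ≤ C)
    (hp : ∀ n, ¬p n → n = N ∨ n = N + 1) (n : ℕ) :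
    (if p n then x n else C) ≤ x n + ((if n = N then C else 0) + if n = N + 1 then C else 0) := by
  split_ifs <;> grind

lemma summable_ite_of_eq_or_eq_succ (hx : Summable x) (hx₀ : ∀ n, 0 ≤ x n) (hC : 0 ≤ C)
    (hp : ∀ n, ¬p n → n = N ∨ n = N + 1) : Summable fun n => if p n then x n else C :=
  (hx.add ((hasSum_ite_eq N C).summable.add (hasSum_ite_eq (N + 1) C).summable)).of_nonneg_of_le
    (fun n => by split_ifs <;> simp [hx₀, hC]) (ite_le_add_ite_add_ite hx₀ hC hp)

lemma tsum_ite_le_of_eq_or_eq_succ (hx : Summable x) (hx₀ : ∀ n, 0 ≤ x n) (hC : 0 ≤ C)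
    (hp : ∀ n, ¬p n → n = N ∨ n = N + 1) :
    ∑' n, (if p n then x n else C) ≤ ∑' n, x n + 2 * C := by
  have hN := (hasSum_ite_eq N C).add (hasSum_ite_eq (N + 1) C)
  exact (hasSum_le (ite_le_add_ite_add_ite hx₀ hC hp)
    (summable_ite_of_eq_or_eq_succ hx hx₀ hC hp).hasSum (hx.hasSum.add hN)).trans_eq (by ring)

end

theorem quotient_of_lacunary_products_bounded
    (Q : ℝ) (hQ : 16 ≤ Q)
    (u : ℕ → ℝ) (hu : ∀ n, u n = 2 ^ n * Q)
    (β : ℕ → ℝ) (hβ : ∀ n, β n ∈ Set.Ioo (1/3 : ℝ) (2/3))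
    (v : ℕ → ℝ) (hv : ∀ n, |v n - (u n - Real.sqrt (u n))| ≤ 1) :
    ∃ c₁ c₂ : ℝ, 0 < c₁ ∧ c₁ ≤ c₂ ∧
      ∀ z : ℂ, z ∉ ⋃ n : ℕ, Metric.ball ((u n : ℂ)) (2 * Real.sqrt (u n)) →
        c₁ ≤ ‖(∏' n : ℕ, (1 - z / (v n : ℂ))) / (∏' n : ℕ, (1 - z / ((u n : ℂ) + (β n : ℂ))))‖ ∧
        ‖(∏' n : ℕ, (1 - z / (v n : ℂ))) / (∏' n : ℕ, (1 - z / ((u n : ℂ) + (β n : ℂ))))‖ ≤ c₂ := by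
  have hQ₀ : 0 < Q := by linarith
  have hu₁₆ : ∀ n, 16 ≤ u n := fun n => by
    rw [hu n]; nlinarith [one_le_pow₀ (M₀ := ℝ) one_le_two (n := n)]
  have hv_mem : ∀ n, v n ∈ zeroWindow (u n) := fun n => by
    obtain ⟨h₁, h₂⟩ := abs_le.1 (hv n)
    exact ⟨by linarith, by linarith [Real.sqrt_nonneg (u n)]⟩
  have hw_mem : ∀ n, u n + β n ∈ zeroWindow (u n) := fun n => by
    obtain ⟨h₁, h₂⟩ := hβ n
    exact ⟨by linarith [Real.sqrt_nonneg (u n)], by linarith⟩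
  have hC := summable_div_sqrt hu 16
  have hC₀ : ∀ n, 0 ≤ 16 / √(u n) := fun n => by positivity
  set B := ∑' n, 16 / √(u n) + 2 * 16
  have hB : 0 ≤ B := by positivity
  refine ⟨exp (-B), exp B, exp_pos _, exp_le_exp.2 (by linarith), fun z hz => ?_⟩
  simp only [Set.mem_iUnion, Metric.mem_ball, Complex.dist_eq, not_exists, not_lt] at hz
  obtain ⟨N, hN⟩ := exists_eq_or_eq_succ_of_not_far hQ₀ hu ‖z‖
  simp_rw [← Complex.ofReal_add]
  exact norm_tprod_div_tprod_mem_Icc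
    (summable_norm_div_of_le_two_mul hQ₀ hu
      (fun n => le_two_mul_of_mem_zeroWindow (hu₁₆ n) (hv_mem n)) z)
    (summable_norm_div_of_le_two_mul hQ₀ hu
      (fun n => le_two_mul_of_mem_zeroWindow (hu₁₆ n) (hw_mem n)) z)
    (fun n => one_sub_div_ne_zero_of_mem_zeroWindow (hu₁₆ n) (hv_mem n) (hz n))
    (fun n => one_sub_div_ne_zero_of_mem_zeroWindow (hu₁₆ n) (hw_mem n) (hz n))
    (summable_ite_of_eq_or_eq_succ hC hC₀ (by norm_num) hN)
    (tsum_ite_le_of_eq_or_eq_succ hC hC₀ (by norm_num) hN)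
    (fun n => abs_log_norm_div_le_of_mem_zeroWindow (hu₁₆ n) (hv_mem n) (hw_mem n) (hz n))
end
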